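/- Let C and Ĉ be real symmetric d×d matrices, and let P_r and P̂_r be the orthogonal projections onto the spans of the top-r eigenvectors of C and Ĉ respectively. If the eigengap g = λ_r(C) − λ_{r+1}(C) > 0 and ‖Ĉ − C‖_op < g/2, then ‖P̂_r − P_r‖_op ≤ 2‖Ĉ − C‖_op / g (a Davis–Kahan type bound). -/

import Mathlib

open scoped Matrix.Norms.L2Operator
open Finset


open Matrix

/-- The ℓ²→ℓ² operator (spectral) norm of a real square matrix. -/
noncomputable def opNorm {d : ℕ} (A : Matrix (Fin d) (Fin d) ℝ) : ℝ :=
  ‖LinearMap.toContinuousLinearMap (Matrix.toEuclideanLin A)‖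

namespace DK
variable {d : ℕ}

noncomputable def en (x : Fin d → ℝ) : EuclideanSpace ℝ (Fin d) := (WithLp.equiv 2 _).symm x

lemma opNorm_eq (A : Matrix (Fin d) (Fin d) ℝ) : opNorm A = ‖A‖ := rfl

lemma en_norm (x : Fin d → ℝ) : ‖en x‖ = Real.sqrt (x ⬝ᵥ x) := by
  rw [EuclideanSpace.norm_eq]
  congr 1
  simp [en, dotProduct, sq, WithLp.equiv_symm_apply, abs_mul_abs_self]

lemma en_dot (x y : Fin d → ℝ) : (inner ℝ (en x) (en y) : ℝ) = x ⬝ᵥ y := by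
  simp [en, PiLp.inner_apply, RCLike.inner_apply, dotProduct, mul_comm]

lemma dot_self_nonneg (x : Fin d → ℝ) : 0 ≤ x ⬝ᵥ x :=
  Finset.sum_nonneg fun i _ => mul_self_nonneg _

lemma en_norm_sq (x : Fin d → ℝ) : ‖en x‖ ^ 2 = x ⬝ᵥ x := by
  rw [en_norm, Real.sq_sqrt (dot_self_nonneg x)]

lemma cs_abs (x y : Fin d → ℝ) : |x ⬝ᵥ y| ≤ ‖en x‖ * ‖en y‖ := by
  rw [← en_dot]; exact abs_real_inner_le_norm _ _

lemma mulVec_norm_le (A : Matrix (Fin d) (Fin d) ℝ) (x : Fin d → ℝ) :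
    ‖en (A *ᵥ x)‖ ≤ ‖A‖ * ‖en x‖ := by
  simpa [en] using A.l2_opNorm_mulVec ((WithLp.equiv 2 _).symm x)

lemma opNorm_le {A : Matrix (Fin d) (Fin d) ℝ} {m : ℝ} (hm : 0 ≤ m)
    (h : ∀ x, ‖en (A *ᵥ x)‖ ≤ m * ‖en x‖) : ‖A‖ ≤ m := by
  rw [l2_opNorm_def]
  refine ContinuousLinearMap.opNorm_le_bound _ hm fun y => ?_
  have := h ((WithLp.equiv 2 _) y)
  simpa [en, Matrix.toEuclideanLin_apply] using this

lemma dot_sum_right {ι : Type*} (s : Finset ι) (x : Fin d → ℝ) (f : ι → Fin d → ℝ) :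
    x ⬝ᵥ (∑ i ∈ s, f i) = ∑ i ∈ s, x ⬝ᵥ f i := by
  simp only [dotProduct, Finset.sum_apply, Finset.mul_sum]
  exact Finset.sum_comm

lemma sum_dot_left {ι : Type*} (s : Finset ι) (x : Fin d → ℝ) (f : ι → Fin d → ℝ) :
    (∑ i ∈ s, f i) ⬝ᵥ x = ∑ i ∈ s, f i ⬝ᵥ x := by
  simp only [dotProduct, Finset.sum_apply, Finset.sum_mul]
  exact Finset.sum_comm

lemma vecMulVec_mulVec (a b x : Fin d → ℝ) :
    (vecMulVec a b) *ᵥ x = (b ⬝ᵥ x) • a := by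
  ext i
  simp only [mulVec, vecMulVec_apply, dotProduct, Pi.smul_apply, smul_eq_mul, Finset.sum_mul]
  exact Finset.sum_congr rfl fun j _ => by ring

lemma sum_mulVec {ι : Type*} (s : Finset ι) (M : ι → Matrix (Fin d) (Fin d) ℝ) (x : Fin d → ℝ) :
    (∑ i ∈ s, M i) *ᵥ x = ∑ i ∈ s, (M i) *ᵥ x := by
  ext k
  simp only [mulVec, dotProduct, Matrix.sum_apply, Finset.sum_apply, Finset.sum_mul]
  exact Finset.sum_comm

section ortho
variable {w : Fin d → Fin d → ℝ}

/-- completeness: `∑ i, w iᵀ w i = 1`. -/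
lemma sum_vecMulVec_eq_one (hw : ∀ i j, w i ⬝ᵥ w j = if i = j then (1:ℝ) else 0) :
    ∑ i : Fin d, vecMulVec (w i) (w i) = (1 : Matrix (Fin d) (Fin d) ℝ) := by
  set V : Matrix (Fin d) (Fin d) ℝ := Matrix.of w with hV
  have h1 : V * Vᵀ = 1 := by
    ext i j
    simpa [Matrix.mul_apply, Matrix.one_apply, dotProduct, V] using hw i j
  have h2 : Vᵀ * V = 1 := mul_eq_one_comm.mp h1
  ext k l
  have := congrFun (congrFun h2 k) l
  simp only [Matrix.mul_apply, Matrix.transpose_apply, Matrix.of_apply, V] at this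
  simp only [Matrix.sum_apply, Matrix.vecMulVec_apply]
  rw [← this]
lemma expand (hw : ∀ i j, w i ⬝ᵥ w j = if i = j then (1:ℝ) else 0) (x : Fin d → ℝ) :
    ∑ i : Fin d, (w i ⬝ᵥ x) • w i = x := by
  have := congrArg (fun M => M *ᵥ x) (sum_vecMulVec_eq_one hw)
  simp only [sum_mulVec, vecMulVec_mulVec, Matrix.one_mulVec] at this
  exact this

lemma parseval (hw : ∀ i j, w i ⬝ᵥ w j = if i = j then (1:ℝ) else 0) (x : Fin d → ℝ) :
    ∑ i : Fin d, (w i ⬝ᵥ x)^2 = x ⬝ᵥ x :=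
  calc ∑ i : Fin d, (w i ⬝ᵥ x)^2
      = ∑ i : Fin d, x ⬝ᵥ ((w i ⬝ᵥ x) • w i) := Finset.sum_congr rfl fun i _ => by
        rw [dotProduct_smul, smul_eq_mul, dotProduct_comm, sq]
    _ = x ⬝ᵥ ∑ i : Fin d, (w i ⬝ᵥ x) • w i := (dot_sum_right _ _ _).symm
    _ = x ⬝ᵥ x := by rw [expand hw x]


lemma opNorm_le_bilin {A : Matrix (Fin d) (Fin d) ℝ} {m : ℝ} (hm : 0 ≤ m)
    (h : ∀ x y, |y ⬝ᵥ (A *ᵥ x)| ≤ m * ‖en y‖ * ‖en x‖) : ‖A‖ ≤ m := by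
  refine opNorm_le hm fun x => ?_
  set u := A *ᵥ x with hu
  have h1 : ‖en u‖^2 ≤ m * ‖en u‖ * ‖en x‖ := by
    rw [en_norm_sq]
    calc u ⬝ᵥ u ≤ |u ⬝ᵥ (A *ᵥ x)| := by rw [← hu]; exact le_abs_self _
      _ ≤ m * ‖en u‖ * ‖en x‖ := h x u
  rcases eq_or_lt_of_le (norm_nonneg (en u)) with h0 | h0
  · rw [← h0]; positivity
  · nlinarith [norm_nonneg (en x)]

lemma norm_transpose (A : Matrix (Fin d) (Fin d) ℝ) : ‖Aᵀ‖ = ‖A‖ := by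
  have : Aᴴ = Aᵀ := by ext i j; simp [conjTranspose_apply]
  rw [← this, l2_opNorm_conjTranspose]

lemma dot_combo {w : Fin d → Fin d → ℝ}
    (hw : ∀ i j, w i ⬝ᵥ w j = if i = j then (1:ℝ) else 0)
    (s : Finset (Fin d)) (c b : Fin d → ℝ) :
    (∑ i ∈ s, c i • w i) ⬝ᵥ (∑ j ∈ s, b j • w j) = ∑ i ∈ s, c i * b i := by
  rw [sum_dot_left]
  refine Finset.sum_congr rfl fun i hi => ?_
  rw [smul_dotProduct, dot_sum_right]
  have : ∀ j ∈ s, w i ⬝ᵥ b j • w j = if i = j then b i else 0 := by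
    intro j hj
    rw [dotProduct_smul, hw i j]
    by_cases hij : i = j <;> simp [hij]
  rw [Finset.sum_congr rfl this, Finset.sum_ite_eq s i (fun j => b i), if_pos hi,
    smul_eq_mul]

lemma normbound {w : Fin d → Fin d → ℝ}
    (hw : ∀ i j, w i ⬝ᵥ w j = if i = j then (1:ℝ) else 0)
    (s : Finset (Fin d)) (μ : Fin d → ℝ) {m : ℝ} (hm : 0 ≤ m)
    (hμ : ∀ i ∈ s, |μ i| ≤ m) :
    ‖∑ i ∈ s, μ i • vecMulVec (w i) (w i)‖ ≤ m := by
  refine opNorm_le hm fun x => ?_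
  have hAx : (∑ i ∈ s, μ i • vecMulVec (w i) (w i)) *ᵥ x
      = ∑ i ∈ s, (μ i * (w i ⬝ᵥ x)) • w i := by
    rw [sum_mulVec]
    refine Finset.sum_congr rfl fun i _ => ?_
    rw [smul_mulVec, vecMulVec_mulVec, smul_smul, mul_comm (μ i)]
  have hsq : (∑ i ∈ s, μ i • vecMulVec (w i) (w i)) *ᵥ x ⬝ᵥ
      ((∑ i ∈ s, μ i • vecMulVec (w i) (w i)) *ᵥ x) = ∑ i ∈ s, (μ i * (w i ⬝ᵥ x))^2 := by
    rw [hAx, dot_combo hw]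
    exact Finset.sum_congr rfl fun i _ => (sq _).symm
  have hle : ∑ i ∈ s, (μ i * (w i ⬝ᵥ x))^2 ≤ m^2 * (x ⬝ᵥ x) := by
    calc ∑ i ∈ s, (μ i * (w i ⬝ᵥ x))^2 ≤ ∑ i ∈ s, m^2 * (w i ⬝ᵥ x)^2 := by
          refine Finset.sum_le_sum fun i hi => ?_
          rw [mul_pow]
          have := hμ i hi
          have h2 : (μ i)^2 ≤ m^2 := by nlinarith [abs_nonneg (μ i), sq_abs (μ i)]
          exact mul_le_mul_of_nonneg_right h2 (sq_nonneg _)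
      _ ≤ ∑ i : Fin d, m^2 * (w i ⬝ᵥ x)^2 := by
          refine Finset.sum_le_sum_of_subset_of_nonneg (Finset.subset_univ s) ?_
          intro i _ _; positivity
      _ = m^2 * (x ⬝ᵥ x) := by rw [← Finset.mul_sum, parseval hw]
  rw [en_norm, en_norm, ← Real.sqrt_sq hm, ← Real.sqrt_mul (sq_nonneg m)]
  exact Real.sqrt_le_sqrt (by rw [← hsq] at hle; exact hle)

lemma quadform {Cm : Matrix (Fin d) (Fin d) ℝ} {lam : Fin d → ℝ} {v : Fin d → Fin d → ℝ}
    (hEig : ∀ i, Cm *ᵥ (v i) = lam i • v i)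
    (hv : ∀ i j, v i ⬝ᵥ v j = if i = j then (1:ℝ) else 0) (x : Fin d → ℝ) :
    x ⬝ᵥ (Cm *ᵥ x) = ∑ i : Fin d, lam i * (v i ⬝ᵥ x)^2 := by
  have hx : Cm *ᵥ x = ∑ i : Fin d, ((v i ⬝ᵥ x) * lam i) • v i := by
    conv_lhs => rw [← expand hv x, ← Matrix.mulVecLin_apply, map_sum]
    refine Finset.sum_congr rfl fun i _ => ?_
    rw [_root_.map_smul, Matrix.mulVecLin_apply, hEig i, smul_smul]
  rw [hx, dot_sum_right]
  refine Finset.sum_congr rfl fun i _ => ?_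
  rw [dotProduct_smul, smul_eq_mul, dotProduct_comm, sq]
  ring

lemma dot_quad_err (A : Matrix (Fin d) (Fin d) ℝ) (x : Fin d → ℝ) :
    |x ⬝ᵥ (A *ᵥ x)| ≤ ‖A‖ * (x ⬝ᵥ x) := by
  calc |x ⬝ᵥ (A *ᵥ x)| ≤ ‖en x‖ * ‖en (A *ᵥ x)‖ := cs_abs _ _
    _ ≤ ‖en x‖ * (‖A‖ * ‖en x‖) :=
        mul_le_mul_of_nonneg_left (mulVec_norm_le A x) (norm_nonneg _)
    _ = ‖A‖ * (x ⬝ᵥ x) := by rw [← en_norm_sq]; ring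

lemma dot_self_pos {x : Fin d → ℝ} (hx : x ≠ 0) : 0 < x ⬝ᵥ x := by
  obtain ⟨k, hk⟩ : ∃ k, x k ≠ 0 := by
    by_contra h
    push_neg at h
    exact hx (funext fun k => h k)
  have h1 : (0:ℝ) < x k * x k := mul_self_pos.mpr hk
  calc (0:ℝ) < x k * x k := h1
    _ ≤ ∑ i : Fin d, x i * x i :=
        Finset.single_le_sum (fun i _ => mul_self_nonneg (x i)) (Finset.mem_univ k)

lemma quad_ge {Cm : Matrix (Fin d) (Fin d) ℝ} {lam : Fin d → ℝ} {v : Fin d → Fin d → ℝ}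
    (hEig : ∀ i, Cm *ᵥ (v i) = lam i • v i)
    (hv : ∀ i j, v i ⬝ᵥ v j = if i = j then (1:ℝ) else 0)
    (hA : Antitone lam) (i0 : Fin d) (x : Fin d → ℝ)
    (hsupp : ∀ j, i0 < j → v j ⬝ᵥ x = 0) :
    lam i0 * (x ⬝ᵥ x) ≤ x ⬝ᵥ (Cm *ᵥ x) := by
  rw [quadform hEig hv, ← parseval hv x, Finset.mul_sum]
  refine Finset.sum_le_sum fun j _ => ?_
  by_cases hj : j ≤ i0
  · exact mul_le_mul_of_nonneg_right (hA hj) (sq_nonneg _)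
  · rw [hsupp j (lt_of_not_ge hj)]
    simp

lemma quad_le {Cm : Matrix (Fin d) (Fin d) ℝ} {lam : Fin d → ℝ} {v : Fin d → Fin d → ℝ}
    (hEig : ∀ i, Cm *ᵥ (v i) = lam i • v i)
    (hv : ∀ i j, v i ⬝ᵥ v j = if i = j then (1:ℝ) else 0)
    (hA : Antitone lam) (i0 : Fin d) (x : Fin d → ℝ)
    (hsupp : ∀ j, j < i0 → v j ⬝ᵥ x = 0) :
    x ⬝ᵥ (Cm *ᵥ x) ≤ lam i0 * (x ⬝ᵥ x) := by
  rw [quadform hEig hv, ← parseval hv x, Finset.mul_sum]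
  refine Finset.sum_le_sum fun j _ => ?_
  by_cases hj : i0 ≤ j
  · exact mul_le_mul_of_nonneg_right (hA hj) (sq_nonneg _)
  · rw [hsupp j (lt_of_not_ge hj)]
    simp

lemma exists_kernel_vec (f : Fin d → Fin d → ℝ) (k0 : Fin d) (h0 : f k0 = 0) :
    ∃ x : Fin d → ℝ, x ≠ 0 ∧ ∀ k, f k ⬝ᵥ x = 0 := by
  set M : Matrix (Fin d) (Fin d) ℝ := Matrix.of f with hM
  have hdet : M.det = 0 :=
    Matrix.det_eq_zero_of_row_eq_zero k0 (fun j => by simp [M, h0])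
  obtain ⟨x, hx0, hMx⟩ := (Matrix.exists_mulVec_eq_zero_iff).mpr hdet
  refine ⟨x, hx0, fun k => ?_⟩
  have := congrFun hMx k
  simpa [M, Matrix.mulVec, Matrix.of_apply] using this

lemma weyl {C Ch : Matrix (Fin d) (Fin d) ℝ} {lam lamh : Fin d → ℝ}
    {v vh : Fin d → Fin d → ℝ}
    (hEig : ∀ i, C *ᵥ (v i) = lam i • v i)
    (hEigh : ∀ i, Ch *ᵥ (vh i) = lamh i • vh i)
    (hOrtho : ∀ i j, v i ⬝ᵥ v j = if i = j then (1:ℝ) else 0)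
    (hOrthoh : ∀ i j, vh i ⬝ᵥ vh j = if i = j then (1:ℝ) else 0)
    (hA : Antitone lam) (hAh : Antitone lamh) (i0 : Fin d) :
    lam i0 - ‖Ch - C‖ ≤ lamh i0 := by
  obtain ⟨x, hx0, hker⟩ := exists_kernel_vec
    (fun k => if k < i0 then vh k else if i0 < k then v k else 0) i0
    (by simp)
  have hv0 : ∀ j, i0 < j → v j ⬝ᵥ x = 0 := fun j hj => by
    have := hker j
    rwa [if_neg (asymm hj).elim, if_pos hj] at this
  have hvh0 : ∀ i, i < i0 → vh i ⬝ᵥ x = 0 := fun i hi => by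
    have := hker i
    rwa [if_pos hi] at this
  have h1 : lam i0 * (x ⬝ᵥ x) ≤ x ⬝ᵥ (C *ᵥ x) := quad_ge hEig hOrtho hA i0 x hv0
  have h2 : x ⬝ᵥ (Ch *ᵥ x) ≤ lamh i0 * (x ⬝ᵥ x) := quad_le hEigh hOrthoh hAh i0 x hvh0
  have h3 : |x ⬝ᵥ ((Ch - C) *ᵥ x)| ≤ ‖Ch - C‖ * (x ⬝ᵥ x) := dot_quad_err _ x
  have h4 : x ⬝ᵥ (Ch *ᵥ x) = x ⬝ᵥ (C *ᵥ x) + x ⬝ᵥ ((Ch - C) *ᵥ x) := by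
    rw [Matrix.sub_mulVec, dotProduct_sub]; ring
  have hxx : 0 < x ⬝ᵥ x := dot_self_pos hx0
  have h5 : (lam i0 - ‖Ch - C‖) * (x ⬝ᵥ x) ≤ lamh i0 * (x ⬝ᵥ x) := by
    have := abs_le.mp h3
    nlinarith
  exact le_of_mul_le_mul_right h5 hxx

lemma mulVec_sum_vec {ι : Type*} (Cm : Matrix (Fin d) (Fin d) ℝ) (s : Finset ι)
    (f : ι → Fin d → ℝ) : Cm *ᵥ (∑ i ∈ s, f i) = ∑ i ∈ s, Cm *ᵥ f i := by
  rw [← Matrix.mulVecLin_apply, map_sum]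
  exact Finset.sum_congr rfl fun i _ => rfl

lemma mulVec_smul_vec (Cm : Matrix (Fin d) (Fin d) ℝ) (c : ℝ) (x : Fin d → ℝ) :
    Cm *ᵥ (c • x) = c • (Cm *ᵥ x) := by
  rw [← Matrix.mulVecLin_apply, _root_.map_smul, Matrix.mulVecLin_apply]

lemma dot_smul_right (c : ℝ) (x y : Fin d → ℝ) : x ⬝ᵥ (c • y) = c * (x ⬝ᵥ y) := by
  rw [dotProduct_smul]; rfl

lemma key {C Ch : Matrix (Fin d) (Fin d) ℝ} {lam lamh : Fin d → ℝ}
    {v vh : Fin d → Fin d → ℝ}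
    (hEig : ∀ i, C *ᵥ (v i) = lam i • v i)
    (hEigh : ∀ i, Ch *ᵥ (vh i) = lamh i • vh i)
    (hChs : Ch.IsSymm)
    (hOrtho : ∀ i j, v i ⬝ᵥ v j = if i = j then (1:ℝ) else 0)
    (hOrthoh : ∀ i j, vh i ⬝ᵥ vh j = if i = j then (1:ℝ) else 0)
    (s t : Finset (Fin d)) {δ : ℝ} (hδ : 0 < δ)
    (hsep : ∀ i ∈ s, ∀ j ∈ t, lamh i + δ ≤ lam j) :
    ‖(∑ i ∈ s, vecMulVec (vh i) (vh i)) * (∑ j ∈ t, vecMulVec (v j) (v j))‖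
      ≤ ‖Ch - C‖ / δ := by
  classical
  set ε := ‖Ch - C‖ with hε
  have hε0 : 0 ≤ ε := norm_nonneg _
  rcases Finset.eq_empty_or_nonempty t with ht | ht
  · simp [ht]
    positivity
  rcases Finset.eq_empty_or_nonempty s with hs | hs
  · simp [hs]
    positivity
  -- the split point
  obtain ⟨j0, hj0t, hj0⟩ := Finset.exists_mem_eq_inf' ht lam
  set c : ℝ := t.inf' ht lam - δ with hc
  have hb : ∀ i ∈ s, 0 ≤ c - lamh i := by
    intro i hi
    have := hsep i hi j0 hj0t
    rw [hc, hj0]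
    linarith
  have ha : ∀ j ∈ t, δ ≤ lam j - c := by
    intro j hj
    have := Finset.inf'_le lam hj
    rw [hc]
    linarith
  have hk : ∀ i ∈ s, ∀ j ∈ t, δ ≤ lam j - lamh i := by
    intro i hi j hj
    have := hsep i hi j hj
    linarith
  -- matrices
  set Au : ℝ → Matrix (Fin d) (Fin d) ℝ :=
    fun u => ∑ i ∈ s, Real.exp (-((c - lamh i) * u)) • vecMulVec (vh i) (vh i) with hAu
  set Bu : ℝ → Matrix (Fin d) (Fin d) ℝ :=
    fun u => ∑ j ∈ t, Real.exp (-((lam j - c) * u)) • vecMulVec (v j) (v j) with hBu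
  set X := (∑ i ∈ s, vecMulVec (vh i) (vh i)) * (∑ j ∈ t, vecMulVec (v j) (v j)) with hX
  refine opNorm_le_bilin (by positivity) fun x y => ?_
  -- the scalar integrand
  set h : ℝ → ℝ := fun u => ∑ i ∈ s, ∑ j ∈ t,
    Real.exp (-((lam j - lamh i) * u)) *
      ((lam j - lamh i) * ((vh i ⬝ᵥ v j) * ((y ⬝ᵥ vh i) * (v j ⬝ᵥ x)))) with hh
  -- mixed middle dot products
  have hmid : ∀ i j, vh i ⬝ᵥ ((C - Ch) *ᵥ v j) = (lam j - lamh i) * (vh i ⬝ᵥ v j) := by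
    intro i j
    have h1 : vh i ⬝ᵥ (C *ᵥ v j) = lam j * (vh i ⬝ᵥ v j) := by
      rw [hEig j, dot_smul_right]
    have h2 : vh i ⬝ᵥ (Ch *ᵥ v j) = lamh i * (vh i ⬝ᵥ v j) := by
      rw [Matrix.dotProduct_mulVec, ← Matrix.mulVec_transpose, hChs.eq, hEigh i,
        smul_dotProduct]
      rfl
    rw [Matrix.sub_mulVec, dotProduct_sub, h1, h2]
    ring
  -- h u is the bilinear form of Au * ((C - Ch) * Bu)
  have hform : ∀ u, h u = y ⬝ᵥ ((Au u * ((C - Ch) * Bu u)) *ᵥ x) := by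
    intro u
    rw [← Matrix.mulVec_mulVec, ← Matrix.mulVec_mulVec]
    have hBx : Bu u *ᵥ x = ∑ j ∈ t, (Real.exp (-((lam j - c) * u)) * (v j ⬝ᵥ x)) • v j := by
      rw [hBu, sum_mulVec]
      refine Finset.sum_congr rfl fun j _ => ?_
      rw [smul_mulVec, vecMulVec_mulVec, smul_smul]
    have hz : (C - Ch) *ᵥ (Bu u *ᵥ x)
        = ∑ j ∈ t, (Real.exp (-((lam j - c) * u)) * (v j ⬝ᵥ x)) • ((C - Ch) *ᵥ v j) := by
      rw [hBx, mulVec_sum_vec]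
      exact Finset.sum_congr rfl fun j _ => mulVec_smul_vec _ _ _
    rw [hz]
    have hAz : ∀ z, Au u *ᵥ z = ∑ i ∈ s, (Real.exp (-((c - lamh i) * u)) * (vh i ⬝ᵥ z)) • vh i := by
      intro z
      rw [hAu, sum_mulVec]
      refine Finset.sum_congr rfl fun i _ => ?_
      rw [smul_mulVec, vecMulVec_mulVec, smul_smul]
    rw [hAz, dot_sum_right, hh]
    refine Finset.sum_congr rfl fun i hi => ?_
    rw [dot_smul_right]
    rw [dot_sum_right]
    rw [Finset.mul_sum, Finset.sum_mul]
    refine Finset.sum_congr rfl fun j hj => ?_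
    rw [dot_smul_right, hmid i j]
    have hexp : Real.exp (-((lam j - lamh i) * u))
        = Real.exp (-((c - lamh i) * u)) * Real.exp (-((lam j - c) * u)) := by
      rw [← Real.exp_add]
      ring_nf
    rw [hexp]
    ring
  -- integrability of each term
  have hterm_int : ∀ i ∈ s, ∀ j ∈ t, MeasureTheory.IntegrableOn
      (fun u => Real.exp (-((lam j - lamh i) * u)) *
        ((lam j - lamh i) * ((vh i ⬝ᵥ v j) * ((y ⬝ᵥ vh i) * (v j ⬝ᵥ x))))) (Set.Ioi 0) := by
    intro i hi j hj
    have hkij : 0 < lam j - lamh i := lt_of_lt_of_le hδ (hk i hi j hj)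
    have h1 := exp_neg_integrableOn_Ioi 0 hkij
    have h2 : MeasureTheory.IntegrableOn
        (fun u => Real.exp (-((lam j - lamh i) * u))) (Set.Ioi 0) := by
      have he : ∀ u : ℝ, -((lam j - lamh i) * u) = -(lam j - lamh i) * u :=
        fun u => by ring
      simp only [he]
      exact h1
    exact h2.mul_const _
  have hint : MeasureTheory.IntegrableOn h (Set.Ioi 0) := by
    rw [hh]
    exact MeasureTheory.integrable_finset_sum _ fun i hi =>
      MeasureTheory.integrable_finset_sum _ fun j hj => hterm_int i hi j hj
  -- scalar exponential integral
  have hI1 : ∀ k K : ℝ, 0 < k →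
      (∫ u in Set.Ioi (0:ℝ), Real.exp (-(k * u)) * (k * K)) = K := by
    intro k K hkpos
    rw [MeasureTheory.integral_mul_const]
    have h2 := MeasureTheory.integral_comp_mul_left_Ioi (fun x => Real.exp (-x)) 0 hkpos
    simp only [mul_zero] at h2
    rw [h2, integral_exp_neg_Ioi_zero, smul_eq_mul, mul_one]
    field_simp
  -- value of the integral of h
  have hXbil : y ⬝ᵥ (X *ᵥ x)
      = ∑ i ∈ s, ∑ j ∈ t, (vh i ⬝ᵥ v j) * ((y ⬝ᵥ vh i) * (v j ⬝ᵥ x)) := by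
    rw [hX, ← Matrix.mulVec_mulVec]
    have h1 : (∑ j ∈ t, vecMulVec (v j) (v j)) *ᵥ x = ∑ j ∈ t, (v j ⬝ᵥ x) • v j := by
      rw [sum_mulVec]
      exact Finset.sum_congr rfl fun j _ => vecMulVec_mulVec _ _ _
    have h2 : (∑ i ∈ s, vecMulVec (vh i) (vh i)) *ᵥ ((∑ j ∈ t, vecMulVec (v j) (v j)) *ᵥ x)
        = ∑ i ∈ s, (vh i ⬝ᵥ ((∑ j ∈ t, vecMulVec (v j) (v j)) *ᵥ x)) • vh i := by
      rw [sum_mulVec]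
      exact Finset.sum_congr rfl fun i _ => vecMulVec_mulVec _ _ _
    rw [h2, dot_sum_right]
    refine Finset.sum_congr rfl fun i hi => ?_
    rw [dot_smul_right, h1, dot_sum_right, Finset.sum_mul]
    refine Finset.sum_congr rfl fun j hj => ?_
    rw [dot_smul_right]
    ring
  have hXint : (∫ u in Set.Ioi (0:ℝ), h u) = y ⬝ᵥ (X *ᵥ x) := by
    have e1 : (∫ u in Set.Ioi (0:ℝ), h u)
        = ∑ i ∈ s, ∫ u in Set.Ioi (0:ℝ), ∑ j ∈ t,
            Real.exp (-((lam j - lamh i) * u)) *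
              ((lam j - lamh i) * ((vh i ⬝ᵥ v j) * ((y ⬝ᵥ vh i) * (v j ⬝ᵥ x)))) := by
      rw [hh]
      exact MeasureTheory.integral_finset_sum _ fun i hi =>
        MeasureTheory.integrable_finset_sum _ fun j hj => hterm_int i hi j hj
    rw [e1, hXbil]
    refine Finset.sum_congr rfl fun i hi => ?_
    rw [MeasureTheory.integral_finset_sum _ fun j hj => hterm_int i hi j hj]
    refine Finset.sum_congr rfl fun j hj => ?_
    exact hI1 _ _ (lt_of_lt_of_le hδ (hk i hi j hj))
  -- pointwise bound
  have hAu_norm : ∀ u : ℝ, 0 ≤ u → ‖Au u‖ ≤ 1 := by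
    intro u hu
    rw [hAu]
    refine normbound hOrthoh s _ zero_le_one fun i hi => ?_
    rw [abs_of_pos (Real.exp_pos _)]
    rw [Real.exp_le_one_iff]
    have := hb i hi
    nlinarith
  have hBu_norm : ∀ u : ℝ, 0 ≤ u → ‖Bu u‖ ≤ Real.exp (-(δ * u)) := by
    intro u hu
    rw [hBu]
    refine normbound hOrtho t _ (le_of_lt (Real.exp_pos _)) fun j hj => ?_
    rw [abs_of_pos (Real.exp_pos _)]
    apply Real.exp_le_exp.mpr
    have := ha j hj
    nlinarith
  have hbound : ∀ u ∈ Set.Ioi (0:ℝ), |h u|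
      ≤ (ε * (‖en y‖ * ‖en x‖)) * Real.exp (-(δ * u)) := by
    intro u hu
    have hu0 : (0:ℝ) ≤ u := le_of_lt hu
    rw [hform u]
    have hM : ‖Au u * ((C - Ch) * Bu u)‖ ≤ ε * Real.exp (-(δ * u)) := by
      calc ‖Au u * ((C - Ch) * Bu u)‖ ≤ ‖Au u‖ * ‖(C - Ch) * Bu u‖ := norm_mul_le _ _
        _ ≤ 1 * ‖(C - Ch) * Bu u‖ :=
            mul_le_mul_of_nonneg_right (hAu_norm u hu0) (norm_nonneg _)
        _ = ‖(C - Ch) * Bu u‖ := one_mul _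
        _ ≤ ‖C - Ch‖ * ‖Bu u‖ := norm_mul_le _ _
        _ ≤ ‖C - Ch‖ * Real.exp (-(δ * u)) :=
            mul_le_mul_of_nonneg_left (hBu_norm u hu0) (norm_nonneg _)
        _ = ε * Real.exp (-(δ * u)) := by rw [norm_sub_rev]
    calc |y ⬝ᵥ ((Au u * ((C - Ch) * Bu u)) *ᵥ x)|
        ≤ ‖en y‖ * ‖en ((Au u * ((C - Ch) * Bu u)) *ᵥ x)‖ := cs_abs _ _
      _ ≤ ‖en y‖ * (‖Au u * ((C - Ch) * Bu u)‖ * ‖en x‖) :=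
          mul_le_mul_of_nonneg_left (mulVec_norm_le _ _) (norm_nonneg _)
      _ ≤ ‖en y‖ * ((ε * Real.exp (-(δ * u))) * ‖en x‖) := by
          refine mul_le_mul_of_nonneg_left ?_ (norm_nonneg _)
          exact mul_le_mul_of_nonneg_right hM (norm_nonneg _)
      _ = (ε * (‖en y‖ * ‖en x‖)) * Real.exp (-(δ * u)) := by ring
  -- assemble
  have hgint : MeasureTheory.IntegrableOn
      (fun u => (ε * (‖en y‖ * ‖en x‖)) * Real.exp (-(δ * u))) (Set.Ioi 0) := by
    have h1 : MeasureTheory.IntegrableOn (fun u => Real.exp (-(δ * u))) (Set.Ioi 0) := by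
      have he : ∀ u : ℝ, -(δ * u) = -δ * u := fun u => by ring
      simp only [he]
      exact exp_neg_integrableOn_Ioi 0 hδ
    exact h1.const_mul _
  have habs : |y ⬝ᵥ (X *ᵥ x)| ≤ (ε * (‖en y‖ * ‖en x‖)) / δ := by
    rw [← hXint]
    calc |∫ u in Set.Ioi (0:ℝ), h u| ≤ ∫ u in Set.Ioi (0:ℝ), |h u| := by
          simpa [Real.norm_eq_abs] using
            MeasureTheory.norm_integral_le_integral_norm (μ := MeasureTheory.volume.restrict (Set.Ioi 0)) h
      _ ≤ ∫ u in Set.Ioi (0:ℝ), (ε * (‖en y‖ * ‖en x‖)) * Real.exp (-(δ * u)) :=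
          MeasureTheory.setIntegral_mono_on hint.abs hgint measurableSet_Ioi hbound
      _ = (ε * (‖en y‖ * ‖en x‖)) / δ := by
          have h2 : (∫ u in Set.Ioi (0:ℝ),
              Real.exp (-(δ * u)) * (δ * ((ε * (‖en y‖ * ‖en x‖)) / δ)))
              = (ε * (‖en y‖ * ‖en x‖)) / δ := hI1 δ _ hδ
          rw [← h2]
          refine MeasureTheory.setIntegral_congr_fun measurableSet_Ioi fun u hu => ?_
          have : δ * ((ε * (‖en y‖ * ‖en x‖)) / δ) = ε * (‖en y‖ * ‖en x‖) := by
            field_simp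
          rw [this]
          ring
  calc |y ⬝ᵥ (X *ᵥ x)| ≤ (ε * (‖en y‖ * ‖en x‖)) / δ := habs
    _ = ε / δ * ‖en y‖ * ‖en x‖ := by ring

lemma vmv_mul (a b c e : Fin d → ℝ) :
    vecMulVec a b * vecMulVec c e = (b ⬝ᵥ c) • vecMulVec a e := by
  ext i j
  simp only [Matrix.mul_apply, vecMulVec_apply, Matrix.smul_apply, smul_eq_mul,
    dotProduct, Finset.sum_mul]
  exact Finset.sum_congr rfl fun k _ => by ring

lemma proj_idem {w : Fin d → Fin d → ℝ}
    (hw : ∀ i j, w i ⬝ᵥ w j = if i = j then (1:ℝ) else 0) (s : Finset (Fin d)) :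
    (∑ i ∈ s, vecMulVec (w i) (w i)) * (∑ j ∈ s, vecMulVec (w j) (w j))
      = ∑ i ∈ s, vecMulVec (w i) (w i) := by
  rw [Finset.sum_mul_sum]
  refine Finset.sum_congr rfl fun i hi => ?_
  rw [Finset.sum_eq_single i (fun j hj hne => ?_) (fun hnotin => absurd hi hnotin)]
  · rw [vmv_mul, hw, if_pos rfl, one_smul]
  · rw [vmv_mul, hw, if_neg (fun hh => hne hh.symm), zero_smul]

lemma proj_symm (w : Fin d → Fin d → ℝ) (s : Finset (Fin d)) :
    (∑ i ∈ s, vecMulVec (w i) (w i))ᵀ = ∑ i ∈ s, vecMulVec (w i) (w i) := by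
  ext i j
  simp only [Matrix.transpose_apply, Matrix.sum_apply, vecMulVec_apply]
  exact Finset.sum_congr rfl fun k _ => mul_comm _ _

lemma dotmm (M N : Matrix (Fin d) (Fin d) ℝ) (a b : Fin d → ℝ) :
    (M *ᵥ a) ⬝ᵥ (N *ᵥ b) = ((Nᵀ * M) *ᵥ a) ⬝ᵥ b := by
  rw [Matrix.dotProduct_mulVec]
  congr 1
  rw [← Matrix.transpose_transpose N, Matrix.vecMul_transpose, Matrix.transpose_transpose,
    Matrix.mulVec_mulVec]

end ortho
end DK

/-- A Davis–Kahan type bound: for symmetric `C, Ĉ` with sorted eigenvalues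
(`lam`, `lamh` antitone, with orthonormal eigenbases `v`, `vh`), if the eigengap
`g = λ_r(C) − λ_{r+1}(C) > 0` and `‖Ĉ − C‖_op < g/2`, then the orthogonal projections
onto the top-`r` eigenspaces satisfy `‖P̂_r − P_r‖_op ≤ 2‖Ĉ − C‖_op / g`. -/
theorem stmt19 {d : ℕ} (r : ℕ) (hr1 : 1 ≤ r) (hrd : r < d)
    (C Ch : Matrix (Fin d) (Fin d) ℝ) (hC : C.IsSymm) (hCh : Ch.IsSymm)
    (lam lamh : Fin d → ℝ) (hA : Antitone lam) (hAh : Antitone lamh)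
    (v vh : Fin d → Fin d → ℝ)
    (hEig : ∀ i, C.mulVec (v i) = lam i • v i)
    (hEigh : ∀ i, Ch.mulVec (vh i) = lamh i • vh i)
    (hOrtho : ∀ i j, v i ⬝ᵥ v j = if i = j then (1 : ℝ) else 0)
    (hOrthoh : ∀ i j, vh i ⬝ᵥ vh j = if i = j then (1 : ℝ) else 0)
    (P Ph : Matrix (Fin d) (Fin d) ℝ)
    (hP : P = ∑ i ∈ Finset.univ.filter (fun i : Fin d => (i : ℕ) < r),
      vecMulVec (v i) (v i))
    (hPh : Ph = ∑ i ∈ Finset.univ.filter (fun i : Fin d => (i : ℕ) < r),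
      vecMulVec (vh i) (vh i))
    (g : ℝ)
    (hg : g = lam ⟨r - 1, lt_trans (Nat.sub_lt_of_pos_le Nat.one_pos hr1) hrd⟩ -
      lam ⟨r, hrd⟩)
    (hgpos : 0 < g) (hclose : opNorm (Ch - C) < g / 2) :
    opNorm (Ph - P) ≤ 2 * opNorm (Ch - C) / g := by
  classical
  rw [DK.opNorm_eq] at hclose
  rw [DK.opNorm_eq, DK.opNorm_eq]
  have hε0 : (0:ℝ) ≤ ‖Ch - C‖ := norm_nonneg _
  set ε := ‖Ch - C‖ with hεdef
  have hr1d : r - 1 < d := lt_trans (Nat.sub_lt_of_pos_le Nat.one_pos hr1) hrd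
  set ri : Fin d := ⟨r - 1, hr1d⟩ with hri
  set rr : Fin d := ⟨r, hrd⟩ with hrr
  have hg' : g = lam ri - lam rr := hg
  have hval_ri : (ri : ℕ) = r - 1 := rfl
  have hval_rr : (rr : ℕ) = r := rfl
  -- Weyl bounds
  have w1 : lam ri - ε ≤ lamh ri := DK.weyl hEig hEigh hOrtho hOrthoh hA hAh ri
  have w2 : lamh rr ≤ lam rr + ε := by
    have h := DK.weyl hEigh hEig hOrthoh hOrtho hAh hA rr
    have : ‖C - Ch‖ = ε := by rw [hεdef, norm_sub_rev]
    linarith [this ▸ h]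
  set δ := g - ε with hδdef
  have hδ : 0 < δ := by
    rw [hδdef]; linarith
  set sf := Finset.univ.filter (fun i : Fin d => (i : ℕ) < r) with hsf
  set sc := Finset.univ.filter (fun i : Fin d => ¬ (i : ℕ) < r) with hsc
  have hmemf : ∀ j : Fin d, j ∈ sf → (j : ℕ) < r := by
    intro j hj; rw [hsf, Finset.mem_filter] at hj; exact hj.2
  have hmemc : ∀ i : Fin d, i ∈ sc → r ≤ (i : ℕ) := by
    intro i hi; rw [hsc, Finset.mem_filter] at hi; exact Nat.le_of_not_lt hi.2
  -- complements of projections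
  have hsum : ∀ w : Fin d → Fin d → ℝ,
      (∀ i j, w i ⬝ᵥ w j = if i = j then (1:ℝ) else 0) →
      (1 : Matrix (Fin d) (Fin d) ℝ) - (∑ i ∈ sf, vecMulVec (w i) (w i))
        = ∑ i ∈ sc, vecMulVec (w i) (w i) := by
    intro w hw
    rw [← DK.sum_vecMulVec_eq_one hw,
      ← Finset.sum_filter_add_sum_filter_not Finset.univ (fun i : Fin d => (i : ℕ) < r)
        (fun i => vecMulVec (w i) (w i))]
    rw [← hsf, ← hsc]
    abel
  have hQh : (1 : Matrix (Fin d) (Fin d) ℝ) - Ph = ∑ i ∈ sc, vecMulVec (vh i) (vh i) := by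
    rw [hPh]; exact hsum vh hOrthoh
  have hQ : (1 : Matrix (Fin d) (Fin d) ℝ) - P = ∑ i ∈ sc, vecMulVec (v i) (v i) := by
    rw [hP]; exact hsum v hOrtho
  -- sin-theta bounds for the two blocks
  have hβ : ‖((1 : Matrix (Fin d) (Fin d) ℝ) - Ph) * P‖ ≤ ε / δ := by
    rw [hQh, hP]
    refine DK.key hEig hEigh hCh hOrtho hOrthoh sc sf hδ ?_
    intro i hi j hj
    have h1 : lamh i ≤ lamh rr := hAh (by
      have hir := hmemc i hi
      rw [Fin.le_def]
      omega)
    have h2 : lam ri ≤ lam j := hA (by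
      have hjr := hmemf j hj
      rw [Fin.le_def]
      omega)
    linarith
  have hα : ‖Ph * ((1 : Matrix (Fin d) (Fin d) ℝ) - P)‖ ≤ ε / δ := by
    have h1 : ‖((1 : Matrix (Fin d) (Fin d) ℝ) - P) * Ph‖ ≤ ‖C - Ch‖ / δ := by
      rw [hQ, hPh]
      refine DK.key hEigh hEig hC hOrthoh hOrtho sc sf hδ ?_
      intro i hi j hj
      have h1 : lam i ≤ lam rr := hA (by
        have hir := hmemc i hi
        rw [Fin.le_def]
        omega)
      have h2 : lamh ri ≤ lamh j := hAh (by
        have hjr := hmemf j hj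
        rw [Fin.le_def]
        omega)
      linarith
    rw [show ‖C - Ch‖ = ε from by rw [hεdef, norm_sub_rev]] at h1
    have hPt : Pᵀ = P := by rw [hP]; exact DK.proj_symm v _
    have hPht : Phᵀ = Ph := by rw [hPh]; exact DK.proj_symm vh _
    have h2 : (((1 : Matrix (Fin d) (Fin d) ℝ) - P) * Ph)ᵀ
        = Ph * ((1 : Matrix (Fin d) (Fin d) ℝ) - P) := by
      rw [Matrix.transpose_mul, Matrix.transpose_sub, Matrix.transpose_one, hPt, hPht]
    calc ‖Ph * ((1 : Matrix (Fin d) (Fin d) ℝ) - P)‖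
        = ‖(((1 : Matrix (Fin d) (Fin d) ℝ) - P) * Ph)ᵀ‖ := by rw [h2]
      _ = ‖((1 : Matrix (Fin d) (Fin d) ℝ) - P) * Ph‖ := DK.norm_transpose _
      _ ≤ ε / δ := h1
  -- projection algebra
  have hPP : P * P = P := by rw [hP]; exact DK.proj_idem hOrtho _
  have hPhPh : Ph * Ph = Ph := by rw [hPh]; exact DK.proj_idem hOrthoh _
  set Q := (1 : Matrix (Fin d) (Fin d) ℝ) - P with hQdef
  set Qh := (1 : Matrix (Fin d) (Fin d) ℝ) - Ph with hQhdef
  have hQQ : Q * Q = Q := by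
    have h0 : Q * Q = 1 - P - (P - P * P) := by rw [hQdef]; noncomm_ring
    rw [h0, hPP, hQdef]
    abel
  have hPQ : Q * P = 0 := by
    rw [hQdef, Matrix.sub_mul, Matrix.one_mul, hPP, sub_self]
  have hQhPh : Qh * Ph = 0 := by
    rw [hQhdef, Matrix.sub_mul, Matrix.one_mul, hPhPh, sub_self]
  have hPt : Pᵀ = P := by rw [hP]; exact DK.proj_symm v _
  have hPht : Phᵀ = Ph := by rw [hPh]; exact DK.proj_symm vh _
  have hQt : Qᵀ = Q := by rw [hQdef, Matrix.transpose_sub, Matrix.transpose_one, hPt]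
  have hdecomp : Ph - P = Ph * Q - Qh * P := by
    rw [hQdef, hQhdef, Matrix.mul_sub, Matrix.sub_mul, Matrix.mul_one, Matrix.one_mul]
    abel
  -- bound constant
  set m := 2 * ε / g with hmdef
  have hm0 : 0 ≤ m := by positivity
  have hεδm : ε / δ ≤ m := by
    rw [hmdef, hδdef, div_le_div_iff₀ hδ hgpos]
    nlinarith
  have hαm : ‖Ph * Q‖ ≤ m := le_trans hα hεδm
  have hβm : ‖Qh * P‖ ≤ m := le_trans hβ hεδm
  -- final vector estimate
  refine DK.opNorm_le hm0 fun yv => ?_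
  set p := P *ᵥ yv with hp
  set q := Q *ᵥ yv with hq
  set u1 := (Ph * Q) *ᵥ q with hu1
  set u2 := (Qh * P) *ᵥ p with hu2
  have hu : (Ph - P) *ᵥ yv = u1 - u2 := by
    rw [hu1, hu2, hp, hq, Matrix.mulVec_mulVec, Matrix.mulVec_mulVec,
      Matrix.mul_assoc Ph Q Q, hQQ, Matrix.mul_assoc Qh P P, hPP,
      hdecomp, Matrix.sub_mulVec]
  have horth : u1 ⬝ᵥ u2 = 0 := by
    rw [hu1, hu2, DK.dotmm]
    have hQht : Qhᵀ = Qh := by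
      rw [hQhdef, Matrix.transpose_sub, Matrix.transpose_one, hPht]
    have hz : (Qh * P)ᵀ * (Ph * Q) = 0 := by
      rw [Matrix.transpose_mul, hPt, hQht, Matrix.mul_assoc P Qh (Ph * Q),
        ← Matrix.mul_assoc Qh Ph Q, hQhPh, Matrix.zero_mul, Matrix.mul_zero]
    rw [hz, Matrix.zero_mulVec, zero_dotProduct]
  have hcross : p ⬝ᵥ q = 0 := by
    rw [hp, hq, DK.dotmm, hQt, hPQ, Matrix.zero_mulVec, zero_dotProduct]
  have hsplit : p ⬝ᵥ p + q ⬝ᵥ q = yv ⬝ᵥ yv := by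
    have hpq : p + q = yv := by
      rw [hp, hq, ← Matrix.add_mulVec]
      simp [hQdef]
    calc p ⬝ᵥ p + q ⬝ᵥ q = (p + q) ⬝ᵥ (p + q) - (p ⬝ᵥ q + q ⬝ᵥ p) := by
          rw [add_dotProduct, dotProduct_add, dotProduct_add]; ring
      _ = yv ⬝ᵥ yv := by rw [hpq, hcross, dotProduct_comm q p, hcross]; ring
  have hu1b : u1 ⬝ᵥ u1 ≤ m^2 * (q ⬝ᵥ q) := by
    have h1 : ‖DK.en u1‖ ≤ m * ‖DK.en q‖ := by
      rw [hu1]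
      exact le_trans (DK.mulVec_norm_le _ _)
        (mul_le_mul_of_nonneg_right hαm (norm_nonneg _))
    rw [← DK.en_norm_sq, ← DK.en_norm_sq]
    nlinarith [norm_nonneg (DK.en u1), norm_nonneg (DK.en q)]
  have hu2b : u2 ⬝ᵥ u2 ≤ m^2 * (p ⬝ᵥ p) := by
    have h1 : ‖DK.en u2‖ ≤ m * ‖DK.en p‖ := by
      rw [hu2]
      exact le_trans (DK.mulVec_norm_le _ _)
        (mul_le_mul_of_nonneg_right hβm (norm_nonneg _))
    rw [← DK.en_norm_sq, ← DK.en_norm_sq]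
    nlinarith [norm_nonneg (DK.en u2), norm_nonneg (DK.en p)]
  have htotal : ((Ph - P) *ᵥ yv) ⬝ᵥ ((Ph - P) *ᵥ yv) ≤ m^2 * (yv ⬝ᵥ yv) := by
    rw [hu]
    have hexp : (u1 - u2) ⬝ᵥ (u1 - u2) = u1 ⬝ᵥ u1 + u2 ⬝ᵥ u2 := by
      rw [sub_dotProduct, dotProduct_sub, dotProduct_sub, horth,
        dotProduct_comm u2 u1, horth]
      ring
    rw [hexp, ← hsplit, mul_add]
    linarith [hu1b, hu2b]
  rw [DK.en_norm, DK.en_norm]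
  calc Real.sqrt (((Ph - P) *ᵥ yv) ⬝ᵥ ((Ph - P) *ᵥ yv))
      ≤ Real.sqrt (m^2 * (yv ⬝ᵥ yv)) := Real.sqrt_le_sqrt htotal
    _ = m * Real.sqrt (yv ⬝ᵥ yv) := by
        rw [Real.sqrt_mul (sq_nonneg m), Real.sqrt_sq hm0]
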